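/- arXiv:1705.08791 — 6 statements merged into one kernel-verified Lean document; each statement's English description precedes it below -/
import Mathlib

section
/- Let S(t) = Σ_{i≥0} s_i t^i be a complex polynomial of degree at most n. Then the polynomial f_S^i(t) is divisible by t for all i ≥ n+2. -/
open Polynomial in
/-- The sequence of polynomials `f_S^i` associated to a coefficient sequence `s`. -/
noncomputable def fseq {R : Type*} [CommRing R] [Algebra ℚ R] (s : ℕ → R) : ℕ → Polynomial R
  | 0 => 0
  | 1 => C (s 0)
  | (k+2) =>
      ((((k : ℚ)+2)^2)⁻¹) •
        (C (s (k+1)) + X *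
          ∑ i ∈ (Finset.range (k+1)).attach,
            (C (s i.1) - ((((i.1 : ℤ))+1) * (2*(i.1 : ℤ)+1-((k : ℤ)+1))) • fseq s (i.1+1) ) *
              fseq s (k+1-i.1))
  termination_by k => k
  decreasing_by
  all_goals (first
    | omega
    | (have h := i.2; rw [Finset.mem_range] at h; omega))

open Polynomial

section

variable {R : Type*} [CommRing R] [Algebra ℚ R]

theorem fseq_add_two_coeff_zero (s : ℕ → R) (k : ℕ) :
    (fseq s (k + 2)).coeff 0 = (((k : ℚ) + 2) ^ 2)⁻¹ • s (k + 1) := by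
  rw [fseq, coeff_smul, coeff_add, coeff_C_zero, coeff_X_mul_zero, add_zero]

theorem X_dvd_fseq_add_two {s : ℕ → R} {k : ℕ} (hs : s (k + 1) = 0) :
    X ∣ fseq s (k + 2) := by
  rw [X_dvd_iff, fseq_add_two_coeff_zero, hs, smul_zero]

end

/-- If `S(t) = Σ s_i t^i` is a complex polynomial of degree at most `n`,
then `f_S^i(t)` is divisible by `t` for all `i ≥ n + 2`. -/
theorem stmt2 (S : Polynomial ℂ) (n : ℕ) (hS : S.degree ≤ n) :
    ∀ i : ℕ, n + 2 ≤ i → Polynomial.X ∣ fseq (fun j => S.coeff j) i := by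
  intro i hi
  obtain ⟨k, rfl⟩ : ∃ k, i = k + 2 := ⟨i - 2, by omega⟩
  refine X_dvd_fseq_add_two (coeff_eq_zero_of_degree_lt (hS.trans_lt ?_))
  exact_mod_cast (by omega : n < k + 1)
end

section
/- Let S(t) ∈ ℂ[[t]] and suppose Q(t) ∈ ℂ[[t]] solves the ODE (t·Q''(t) + Q'(t))·Q(t) − t·(Q'(t))² = S(t)·Q(t), and suppose Q(t) is divisible by t^m but not by t^{m+1}. Write Q(t) = t^m·Q₁(t) with Q₁ ∈ ℂ[[t]]. Then Q₁(0) ≠ 0, S(t) is divisible by t^m, and writing S(t) = t^m·S₁(t), the power series Q₁(t) solves the same ODE with data S₁(t), i.e. (t·Q₁''(t) + Q₁'(t))·Q₁(t) − t·(Q₁'(t))² = S₁(t)·Q₁(t). -/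
open PowerSeries

def SolvesODE (S Q : PowerSeries ℂ) : Prop :=
  (X * (d⁄dX ℂ) ((d⁄dX ℂ) Q) + (d⁄dX ℂ) Q) * Q - X * ((d⁄dX ℂ) Q) ^ 2 = S * Q

/-
The left-hand side `L(Q) = (t Q'' + Q') Q − t Q'²` is homogeneous of degree two under
multiplication by `t`: `L(t R) = t² L(R)`, hence `L(t^m Q₁) = t^{2m} L(Q₁)`. The ODE for
`Q = t^m Q₁` therefore reads `t^{2m} L(Q₁) = t^m S Q₁`, and cancelling `t^m` (a non-zero-divisor)
gives `t^m L(Q₁) = S Q₁`. Since `t^{m+1} ∤ Q`, `Q₁` is a unit, so `t^m ∣ S`, and writing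
`S = t^m S₁` a second cancellation yields `L(Q₁) = S₁ Q₁`.
-/

namespace PowerSeries

variable {R : Type*} [CommRing R]

noncomputable def odeLHS (Q : R⟦X⟧) : R⟦X⟧ :=
  (X * d⁄dX R (d⁄dX R Q) + d⁄dX R Q) * Q - X * (d⁄dX R Q) ^ 2

theorem derivative_X_mul (f : R⟦X⟧) : d⁄dX R (X * f) = f + X * d⁄dX R f := by
  rw [Derivation.leibniz, smul_eq_mul, smul_eq_mul, derivative_X, mul_one, add_comm]

theorem odeLHS_X_mul (f : R⟦X⟧) : odeLHS (X * f) = X ^ 2 * odeLHS f := by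
  have hsecond : d⁄dX R (d⁄dX R (X * f)) = 2 * d⁄dX R f + X * d⁄dX R (d⁄dX R f) := by
    rw [derivative_X_mul, map_add, derivative_X_mul]
    ring
  rw [odeLHS, odeLHS, hsecond, derivative_X_mul]
  ring

theorem odeLHS_X_pow_mul (m : ℕ) (f : R⟦X⟧) : odeLHS (X ^ m * f) = X ^ (2 * m) * odeLHS f := by
  induction m with
  | zero => simp
  | succ n ih =>
    rw [pow_succ', mul_assoc, odeLHS_X_mul, ih]
    ring

theorem X_pow_mul_odeLHS_of_odeLHS_X_pow_mul {S Q₁ : R⟦X⟧} {m : ℕ}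
    (h : odeLHS (X ^ m * Q₁) = S * (X ^ m * Q₁)) : X ^ m * odeLHS Q₁ = S * Q₁ := by
  apply X_pow_mul_cancel (k := m)
  rw [← mul_assoc, ← pow_add, ← two_mul, ← odeLHS_X_pow_mul, h]
  ring

theorem constantCoeff_ne_zero_of_not_X_pow_succ_dvd {Q₁ : R⟦X⟧} {m : ℕ}
    (h : ¬ (X : R⟦X⟧) ^ (m + 1) ∣ X ^ m * Q₁) : constantCoeff Q₁ ≠ 0 := by
  rw [pow_succ] at h
  contrapose! h
  exact mul_dvd_mul_left _ (X_dvd_iff.mpr h)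

end PowerSeries

theorem solvesODE_iff {S Q : ℂ⟦X⟧} : SolvesODE S Q ↔ odeLHS Q = S * Q := Iff.rfl

theorem stmt3_general (S Q Q₁ : PowerSeries ℂ) (m : ℕ)
    (hode : SolvesODE S Q)
    (hndvd : ¬ (X : PowerSeries ℂ) ^ (m + 1) ∣ Q)
    (hQ : Q = (X : PowerSeries ℂ) ^ m * Q₁) :
    constantCoeff Q₁ ≠ 0 ∧ (X : PowerSeries ℂ) ^ m ∣ S ∧
      ∀ S₁ : PowerSeries ℂ, S = (X : PowerSeries ℂ) ^ m * S₁ → SolvesODE S₁ Q₁ := by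
  subst hQ
  have hc : constantCoeff Q₁ ≠ 0 := constantCoeff_ne_zero_of_not_X_pow_succ_dvd hndvd
  have hkey : X ^ m * odeLHS Q₁ = S * Q₁ :=
    X_pow_mul_odeLHS_of_odeLHS_X_pow_mul (solvesODE_iff.mp hode)
  have hunit : IsUnit Q₁ := isUnit_iff_constantCoeff.mpr hc.isUnit
  have hS : X ^ m ∣ S := hunit.dvd_mul_right.mp (hkey ▸ dvd_mul_right _ _)
  refine ⟨hc, hS, fun S₁ hS₁ => solvesODE_iff.mpr (X_pow_mul_cancel (k := m) ?_)⟩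
  rw [hkey, hS₁, mul_assoc]

/-- If `Q` solves the ODE for data `S`, `Q` is divisible by `t^m`
but not by `t^{m+1}`, and `Q = t^m·Q₁`, then `Q₁(0) ≠ 0`, `S` is divisible by `t^m`,
and for any `S₁` with `S = t^m·S₁`, the series `Q₁` solves the ODE with data `S₁`. -/
theorem stmt3 (S Q Q₁ : PowerSeries ℂ) (m : ℕ)
    (hode : SolvesODE S Q)
    (hdvd : (X : PowerSeries ℂ) ^ m ∣ Q)
    (hndvd : ¬ (X : PowerSeries ℂ) ^ (m + 1) ∣ Q)
    (hQ : Q = (X : PowerSeries ℂ) ^ m * Q₁) :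
    constantCoeff Q₁ ≠ 0 ∧ (X : PowerSeries ℂ) ^ m ∣ S ∧
      ∀ S₁ : PowerSeries ℂ, S = (X : PowerSeries ℂ) ^ m * S₁ → SolvesODE S₁ Q₁ :=
  stmt3_general S Q Q₁ m hode hndvd hQ
end

section
/- Let S(t) be a complex polynomial of degree m. If a polynomial Q(t) of degree n solves the ODE (t·Q''(t) + Q'(t))·Q(t) − t·(Q'(t))² = S(t)·Q(t), then n ≥ m+2. -/
open Polynomial

/-- A polynomial `Q` solves the ODE
`(t·Q''(t) + Q'(t))·Q(t) − t·(Q'(t))² = S(t)·Q(t)` for the data `S`. -/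
def SolvesODEPoly (S Q : Polynomial ℂ) : Prop :=
  (X * derivative (derivative Q) + derivative Q) * Q - X * (derivative Q) ^ 2 = S * Q

/-!
With the Euler operator `θ = t·d/dt`, `t` times the left-hand side of the ODE is
`Q·θ²Q − (θQ)²`. If `Q = a tⁿ + …`, both terms have `t^{2n}`-coefficient `n²a²`, so the
left-hand side has degree at most `2n − 2`, whereas `S·Q` has degree `m + n`.
-/

namespace Polynomial

section Semiring

variable {R : Type*} [Semiring R]

/-- The Euler operator `θ = t·d/dt`. -/
noncomputable def eulerOp (p : R[X]) : R[X] := X * derivative p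

theorem coeff_eulerOp (p : R[X]) (k : ℕ) : (eulerOp p).coeff k = k * p.coeff k := by
  cases k with
  | zero => simp [eulerOp]
  | succ k => rw [eulerOp, coeff_X_mul, coeff_derivative, ← Nat.cast_succ, Nat.cast_comm]

theorem natDegree_eulerOp_le (p : R[X]) : (eulerOp p).natDegree ≤ p.natDegree :=
  natDegree_le_iff_coeff_eq_zero.mpr fun k hk ↦ by
    rw [coeff_eulerOp, coeff_eq_zero_of_natDegree_lt hk, mul_zero]

end Semiring

variable {R : Type*} [CommRing R]

theorem degree_mul_eulerOp_eulerOp_sub_sq_lt (p : R[X]) :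
    (p * eulerOp (eulerOp p) - eulerOp p ^ 2).degree < ↑(2 * p.natDegree) := by
  set n := p.natDegree
  have hθ : (eulerOp p).natDegree ≤ n := natDegree_eulerOp_le p
  have hθθ : (eulerOp (eulerOp p)).natDegree ≤ n := (natDegree_eulerOp_le _).trans hθ
  have hle : (p * eulerOp (eulerOp p) - eulerOp p ^ 2).natDegree ≤ 2 * n := by
    refine (natDegree_sub_le_of_le (natDegree_mul_le_of_le le_rfl hθθ)
      (natDegree_pow_le_of_le 2 hθ)).trans ?_
    omega
  refine (degree_lt_iff_coeff_zero _ _).mpr fun k hk ↦ ?_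
  rcases hk.eq_or_lt with rfl | hlt
  · rw [coeff_sub, two_mul, pow_two, coeff_mul_add_eq_of_natDegree_le le_rfl hθθ,
      coeff_mul_add_eq_of_natDegree_le hθ hθ, coeff_eulerOp, coeff_eulerOp]
    ring
  · exact coeff_eq_zero_of_natDegree_lt (hle.trans_lt hlt)

theorem X_mul_odeLHS_eq_eulerOp (Q : R[X]) :
    X * ((X * derivative (derivative Q) + derivative Q) * Q - X * derivative Q ^ 2) =
      Q * eulerOp (eulerOp Q) - eulerOp Q ^ 2 := by
  simp only [eulerOp, derivative_mul, derivative_X, one_mul]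
  ring

end Polynomial

/-- If `S` is a complex polynomial of degree `m` and a polynomial `Q`
of degree `n` solves the ODE for data `S`, then `n ≥ m + 2`. -/
theorem stmt5 (S Q : Polynomial ℂ) (m n : ℕ) (hS : S.degree = m) (hQ : Q.degree = n)
    (hode : SolvesODEPoly S Q) : m + 2 ≤ n := by
  have hlt := degree_mul_eulerOp_eulerOp_sub_sq_lt Q
  rw [← X_mul_odeLHS_eq_eulerOp, hode, degree_mul, degree_mul, degree_X, hS, hQ,
    natDegree_eq_of_degree_eq_some hQ] at hlt
  have : 1 + (m + n) < 2 * n := by exact_mod_cast hlt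
  omega
end

section
/- Let S(t) be a complex polynomial of degree m and suppose Q(t) is a polynomial solution of degree n of the ODE (t·Q'' + Q')·Q − t·(Q')² = S·Q. Then the reversed polynomial Q̃(t) = t^n·Q(1/t) solves the same ODE with data t^{n−m−2}·S̃(t), where S̃(t) = t^m·S(1/t). -/
open Polynomial

/-!
With the Euler operator `θ = t·d/dt`, multiplying the ODE by `t` turns it into
`W(Q) := Q·θ²Q − (θQ)² = t·S·Q`. Reflection at degree `N` conjugates `θ` into `N − θ`, and `W` is
unchanged when `θ` is replaced by `N − θ`; hence `W(Q̃)` is the reflection of `W(Q)` at degree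
`2n`, and the reflection of `t·S·Q` is `t^{n−m−1}·S̃·Q̃`. Writing `W(Q) = Q·(n − θ)R − R²` with
`R = (n − θ)Q` of degree `< n` also gives `deg W(Q) < 2n`, which forces `m + 2 ≤ n`.
-/

namespace Polynomial

section CommRing

variable {R : Type*} [CommRing R]

noncomputable def euler (p : R[X]) : R[X] := X * derivative p

noncomputable def eulerWronskian (p : R[X]) : R[X] := p * euler (euler p) - euler p ^ 2

theorem coeff_euler (p : R[X]) (k : ℕ) : (euler p).coeff k = k * p.coeff k := by
  rcases k with _ | k
  · simp [euler, mul_coeff_zero]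
  · rw [euler, coeff_X_mul, coeff_derivative]
    push_cast
    ring

theorem euler_natCast_mul_sub_euler (N : ℕ) (p : R[X]) :
    euler ((N : R[X]) * p - euler p) = N * euler p - euler (euler p) := by
  simp only [euler, derivative_sub, derivative_mul, derivative_natCast]
  ring

theorem coeff_natCast_mul_sub_euler (N : ℕ) (p : R[X]) (k : ℕ) :
    ((N : R[X]) * p - euler p).coeff k = (N - k) * p.coeff k := by
  rw [coeff_sub, coeff_natCast_mul, coeff_euler, sub_mul]

theorem natDegree_natCast_mul_sub_euler_le {N : ℕ} {p : R[X]} (hp : p.natDegree ≤ N) :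
    ((N : R[X]) * p - euler p).natDegree ≤ N - 1 := by
  refine natDegree_le_iff_coeff_eq_zero.mpr fun k hk => ?_
  rw [coeff_natCast_mul_sub_euler]
  rcases (show N = k ∨ N < k by omega) with rfl | hNk
  · rw [sub_self, zero_mul]
  · rw [coeff_eq_zero_of_natDegree_lt (hp.trans_lt hNk), mul_zero]

theorem euler_reflect {N : ℕ} {p : R[X]} (hp : p.natDegree ≤ N) :
    euler (reflect N p) = reflect N ((N : R[X]) * p - euler p) := by
  ext k
  rw [coeff_euler, coeff_reflect, coeff_reflect, coeff_natCast_mul_sub_euler]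
  rcases le_or_gt k N with hk | hk
  · rw [revAt_le hk, Nat.cast_sub hk, sub_sub_cancel]
  · rw [revAt_eq_self_of_lt hk, coeff_eq_zero_of_natDegree_lt (hp.trans_lt hk), mul_zero,
      mul_zero]

theorem eulerWronskian_eq_natCast_sub_euler (N : ℕ) (p : R[X]) :
    eulerWronskian p =
      p * ((N : R[X]) * ((N : R[X]) * p - euler p) - euler ((N : R[X]) * p - euler p))
        - ((N : R[X]) * p - euler p) ^ 2 := by
  rw [eulerWronskian, euler_natCast_mul_sub_euler]
  ring

theorem natDegree_eulerWronskian_le {N : ℕ} {p : R[X]} (hp : p.natDegree ≤ N) :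
    (eulerWronskian p).natDegree ≤ N + (N - 1) := by
  have hq := natDegree_natCast_mul_sub_euler_le hp
  have hr := natDegree_natCast_mul_sub_euler_le (hq.trans (Nat.sub_le N 1))
  rw [eulerWronskian_eq_natCast_sub_euler N]
  refine (natDegree_sub_le _ _).trans
    (max_le (natDegree_mul_le_of_le hp hr) ((natDegree_pow_le_of_le 2 hq).trans ?_))
  omega

theorem eulerWronskian_reflect {N : ℕ} {p : R[X]} (hp : p.natDegree ≤ N) :
    eulerWronskian (reflect N p) = reflect (N + N) (eulerWronskian p) := by
  have hq := (natDegree_natCast_mul_sub_euler_le hp).trans (Nat.sub_le N 1)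
  have hr := (natDegree_natCast_mul_sub_euler_le hq).trans (Nat.sub_le N 1)
  rw [eulerWronskian, euler_reflect hp, euler_reflect hq, eulerWronskian_eq_natCast_sub_euler N p,
    reflect_sub (p * _), reflect_mul _ _ hp hr, sq, sq, reflect_mul _ _ hq hq]

end CommRing

theorem X_mul_odeLHS_eq_eulerWronskian {R : Type*} [CommRing R] (Q : R[X]) :
    X * ((X * derivative (derivative Q) + derivative Q) * Q - X * derivative Q ^ 2) =
      eulerWronskian Q := by
  simp only [eulerWronskian, euler, derivative_mul, derivative_X]
  ring

end Polynomial

theorem solvesODEPoly_iff (S Q : ℂ[X]) : SolvesODEPoly S Q ↔ eulerWronskian Q = X * S * Q := by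
  rw [SolvesODEPoly, ← X_mul_odeLHS_eq_eulerWronskian, mul_assoc]
  exact (mul_right_injective₀ X_ne_zero).eq_iff.symm

theorem SolvesODEPoly.natDegree_add_two_le {S Q : ℂ[X]} (h : SolvesODEPoly S Q) (hS : S ≠ 0)
    (hQ : Q ≠ 0) : S.natDegree + 2 ≤ Q.natDegree := by
  have hdeg := natDegree_eulerWronskian_le (le_refl Q.natDegree)
  rw [(solvesODEPoly_iff S Q).mp h, natDegree_mul (mul_ne_zero X_ne_zero hS) hQ,
    natDegree_mul X_ne_zero hS, natDegree_X] at hdeg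
  omega

/-- Let `S` be a complex polynomial of degree `m` and suppose `Q` is a
polynomial solution of degree `n` of the ODE with data `S`. Then the reversed polynomial
`Q̃(t) = t^n·Q(1/t)` solves the ODE with data `t^{n−m−2}·S̃(t)`, where `S̃(t) = t^m·S(1/t)`. -/
theorem stmt11 (S Q : Polynomial ℂ) (m n : ℕ) (hS : S.degree = m) (hQ : Q.degree = n)
    (hode : SolvesODEPoly S Q) :
    SolvesODEPoly (X ^ (n - m - 2) * S.reverse) Q.reverse := by
  have hm : S.natDegree = m := natDegree_eq_of_degree_eq_some hS
  have hn : Q.natDegree = n := natDegree_eq_of_degree_eq_some hQ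
  have hmn : m + 2 ≤ n := hm ▸ hn ▸
    hode.natDegree_add_two_le (ne_zero_of_coe_le_degree hS.ge) (ne_zero_of_coe_le_degree hQ.ge)
  have hX : reflect (n - m) (X : ℂ[X]) = X ^ (n - m - 2) * X := by
    rw [← pow_succ, show n - m - 2 + 1 = n - m - 1 by omega, ← revAt_le (N := n - m) (by omega),
      ← reflect_monomial, pow_one]
  rw [solvesODEPoly_iff] at hode ⊢
  rw [reverse, reverse, hm, hn, eulerWronskian_reflect hn.le, hode,
    show n + n = n - m + m + n by omega,
    reflect_mul _ _ ((natDegree_mul_le_of_le natDegree_X_le hm.le).trans (by omega)) hn.le,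
    reflect_mul _ _ (natDegree_X_le.trans (by omega)) hm.le, hX]
  ring
end

section
/- Let v ∈ ℂ[x,y] solve the PDE v·v_{xy} − v_x·v_y = σ·v for a data σ ∈ ℂ[x,y]. Assume there exists m ∈ ℕ such that v is divisible by (xy)^m but divisible neither by x^{m+1}y^m nor by x^m y^{m+1}. Then σ is divisible by (xy)^m; moreover, if u, γ ∈ ℂ[x,y] are the polynomials with v = (xy)^m·u and σ = (xy)^m·γ, then u solves the PDE u·u_{xy} − u_x·u_y = γ·u for the data γ. -/
open MvPolynomial

/- The left-hand side of the PDE is `u² ∂ₓ∂ᵧ log u`, so it obeys the product rule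
`D(fg) = f² D g + g² D f` and vanishes on monomials. Writing `v = (xy)^m u` therefore turns
`D v = σ v` into `(xy)^m D u = σ u`. The non-divisibility hypotheses say that neither `x` nor `y`
divides `u`, and since `x` and `y` are non-associated primes, `(xy)^m ∣ σ u` forces `(xy)^m ∣ σ`. -/

/-- A bivariate polynomial `u ∈ ℂ[x,y]` solves the PDE
`u·u_{xy} − u_x·u_y = σ·u` for the data `σ`, where `x` is the variable `0` and `y` is
the variable `1`. -/
def SolvesPDE (σ u : MvPolynomial (Fin 2) ℂ) : Prop :=
  u * pderiv 0 (pderiv 1 u) - pderiv 0 u * pderiv 1 u = σ * u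

namespace MvPolynomial

variable {ι R : Type*} [CommRing R]

noncomputable def mixedLogDeriv (i j : ι) (u : MvPolynomial ι R) : MvPolynomial ι R :=
  u * pderiv i (pderiv j u) - pderiv i u * pderiv j u

theorem mixedLogDeriv_mul (i j : ι) (f g : MvPolynomial ι R) :
    mixedLogDeriv i j (f * g) = f ^ 2 * mixedLogDeriv i j g + g ^ 2 * mixedLogDeriv i j f := by
  simp only [mixedLogDeriv, Derivation.leibniz, map_add, smul_eq_mul]
  ring

theorem mixedLogDeriv_pow_of_eq_zero {i j : ι} {f : MvPolynomial ι R}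
    (hf : mixedLogDeriv i j f = 0) (n : ℕ) : mixedLogDeriv i j (f ^ n) = 0 := by
  induction n with
  | zero => simp [mixedLogDeriv]
  | succ n ih => rw [pow_succ, mixedLogDeriv_mul, ih, hf]; ring

theorem mixedLogDeriv_X {i j : ι} (hij : i ≠ j) (k : ι) :
    mixedLogDeriv i j (X k : MvPolynomial ι R) = 0 := by
  rcases eq_or_ne k j with rfl | hkj
  · simp [mixedLogDeriv, pderiv_X_of_ne hij.symm]
  · simp [mixedLogDeriv, pderiv_X_of_ne hkj]

theorem mixedLogDeriv_X_mul_X_pow {i j : ι} (hij : i ≠ j) (k l : ι) (n : ℕ) :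
    mixedLogDeriv i j ((X k * X l : MvPolynomial ι R) ^ n) = 0 :=
  mixedLogDeriv_pow_of_eq_zero (by simp [mixedLogDeriv_mul, mixedLogDeriv_X hij]) n

theorem mul_mixedLogDeriv_eq_of_mixedLogDeriv_mul_eq [IsDomain R] {i j : ι}
    {P u σ : MvPolynomial ι R} (hP : P ≠ 0) (hDP : mixedLogDeriv i j P = 0)
    (h : mixedLogDeriv i j (P * u) = σ * (P * u)) : P * mixedLogDeriv i j u = σ * u := by
  rw [mixedLogDeriv_mul, hDP, mul_zero, add_zero] at h
  exact mul_left_cancel₀ hP (by linear_combination h)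

end MvPolynomial

theorem solvesPDE_iff (σ u : MvPolynomial (Fin 2) ℂ) :
    SolvesPDE σ u ↔ mixedLogDeriv 0 1 u = σ * u :=
  Iff.rfl

theorem pow_mul_pow_dvd_of_dvd_mul {M : Type*} [CommMonoidWithZero M] [IsCancelMulZero M]
    {p q a b : M}
    (hp : Prime p) (hq : Prime q) (hqp : ¬ q ∣ p) (hpb : ¬ p ∣ b) (hqb : ¬ q ∣ b) {k l : ℕ}
    (h : p ^ k * q ^ l ∣ a * b) : p ^ k * q ^ l ∣ a := by
  obtain ⟨c, rfl⟩ : p ^ k ∣ a := hp.pow_dvd_of_dvd_mul_right k hpb ((dvd_mul_right _ _).trans h)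
  have hqcb : q ^ l ∣ p ^ k * c * b := (dvd_mul_left _ _).trans h
  have hqc : q ^ l ∣ p ^ k * c := hq.pow_dvd_of_dvd_mul_right l hqb hqcb
  exact mul_dvd_mul_left _
    (hq.pow_dvd_of_dvd_mul_left l (fun h ↦ hqp (hq.dvd_of_dvd_pow h)) hqc)

/-- Let `v` solve the PDE for the data `σ`, and assume `v` is divisible
by `(xy)^m` but neither by `x^{m+1}y^m` nor by `x^m y^{m+1}`. Then `σ` is divisible by
`(xy)^m`, and if `v = (xy)^m·u` and `σ = (xy)^m·γ`, then `u` solves the PDE for the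
data `γ`. -/
theorem stmt14 (σ v : MvPolynomial (Fin 2) ℂ) (m : ℕ)
    (hode : SolvesPDE σ v)
    (h1 : (X 0 * X 1) ^ m ∣ v)
    (h2 : ¬ (X 0 ^ (m + 1) * X 1 ^ m ∣ v))
    (h3 : ¬ (X 0 ^ m * X 1 ^ (m + 1) ∣ v)) :
    (X 0 * X 1) ^ m ∣ σ ∧
      ∀ u γ : MvPolynomial (Fin 2) ℂ,
        v = (X 0 * X 1) ^ m * u → σ = (X 0 * X 1) ^ m * γ → SolvesPDE γ u := by
  have hP : ((X 0 * X 1) ^ m : MvPolynomial (Fin 2) ℂ) ≠ 0 :=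
    pow_ne_zero _ (mul_ne_zero (X_ne_zero 0) (X_ne_zero 1))
  have reduced (u) (hu : v = (X 0 * X 1) ^ m * u) :
      (X 0 * X 1) ^ m * mixedLogDeriv 0 1 u = σ * u := by
    rw [solvesPDE_iff, hu] at hode
    exact mul_mixedLogDeriv_eq_of_mixedLogDeriv_mul_eq hP
      (mixedLogDeriv_X_mul_X_pow (by decide) 0 1 m) hode
  refine ⟨?_, fun u γ hu hγ ↦ ?_⟩
  · obtain ⟨u, hu⟩ := h1
    have hx : ¬ X 0 ∣ u := by
      rintro ⟨w, rfl⟩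
      exact h2 ⟨w, by rw [hu]; ring⟩
    have hy : ¬ X 1 ∣ u := by
      rintro ⟨w, rfl⟩
      exact h3 ⟨w, by rw [hu]; ring⟩
    have hdvd : (X 0 * X 1) ^ m ∣ σ * u := ⟨_, (reduced u hu).symm⟩
    rw [mul_pow] at hdvd ⊢
    exact pow_mul_pow_dvd_of_dvd_mul X_prime X_prime (by simp) hx hy hdvd
  · have h := reduced u hu
    rw [hγ, mul_assoc] at h
    exact (solvesPDE_iff γ u).2 (mul_left_cancel₀ hP h)
end

section
/- Let σ ∈ P_m[x,y] with total degree 2m−2 and let n ≥ m+2. If u ∈ P_n[x,y] solves the PDE u·u_{xy} − u_x·u_y = σ·u, then ũ(x,y) = (xy)^n·u(1/x,1/y) solves the PDE with data (xy)^{n−m−2}·σ̃(x,y), where σ̃(x,y) = (xy)^m·σ(1/x,1/y). -/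
open MvPolynomial

/-- For `u = Σ_{i,j=0}^{n−1} a_{ij} x^i y^j ∈ P_n[x,y]`, the reversal
`ũ(x,y) = (xy)^n·u(1/x,1/y) = Σ_{i,j=0}^{n−1} a_{ij} x^{n−i} y^{n−j}`. -/
noncomputable def mvRev (n : ℕ) (u : MvPolynomial (Fin 2) ℂ) : MvPolynomial (Fin 2) ℂ :=
  ∑ i ∈ Finset.range n, ∑ j ∈ Finset.range n,
    monomial (Finsupp.single (0 : Fin 2) (n - i) + Finsupp.single (1 : Fin 2) (n - j))
      (coeff (Finsupp.single (0 : Fin 2) i + Finsupp.single (1 : Fin 2) j) u)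

/-!
Write `reflect N p` for `X ^ N * p (1 / X)`. On polynomials with exponents bounded by the boxes it
is multiplicative, `reflect M p * reflect N q = reflect (M + N) (p * q)`, and it turns derivatives
into an Euler-type relation `X i * ∂ᵢ (reflect N p) = N i * reflect N p - reflect (N - eᵢ) (∂ᵢ p)`.
Applying the relation twice to `U = reflect (n, n) u` gives
`xy (U U_xy - U_x U_y) = reflect (2n - 1, 2n - 1) (u u_xy - u_x u_y)`, and by the PDE and
multiplicativity this is `reflect (n - 1, n - 1) σ * U = (xy) ^ (n - 1 - m) * σ̃ * U`.
-/

namespace MvPolynomial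

section CommSemiring

variable {ι R : Type*} [CommSemiring R]

/-- Exponentwise reversal `d ↦ N - d`. It equals `X ^ N * p (1 / X)` only when every exponent of
`p` is `≤ N`; beyond that the truncated subtraction folds exponents together. -/
noncomputable def reflect (N : ι →₀ ℕ) : MvPolynomial ι R →ₗ[R] MvPolynomial ι R :=
  AddMonoidAlgebra.mapDomainLinearMap R R (N - ·)

theorem reflect_monomial (N d : ι →₀ ℕ) (c : R) :
    reflect N (monomial d c) = monomial (N - d) c := by
  simp only [reflect, ← single_eq_monomial, AddMonoidAlgebra.mapDomainLinearMap_single]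

theorem reflect_eq_sum (N : ι →₀ ℕ) (p : MvPolynomial ι R) :
    reflect N p = ∑ d ∈ p.support, monomial (N - d) (coeff d p) := by
  conv_lhs => rw [p.as_sum]
  simp only [map_sum, reflect_monomial]

theorem pderiv_eq_sum (i : ι) (p : MvPolynomial ι R) :
    pderiv i p = ∑ d ∈ p.support, monomial (d - Finsupp.single i 1) (coeff d p * d i) := by
  conv_lhs => rw [p.as_sum]
  simp only [map_sum, pderiv_monomial]

theorem le_of_mem_support_pderiv {N : ι →₀ ℕ} {p : MvPolynomial ι R}
    (hp : ∀ d ∈ p.support, d ≤ N) (i : ι) :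
    ∀ d ∈ (pderiv i p).support, d ≤ N - Finsupp.single i 1 := by
  classical
  intro d hd
  rw [pderiv_eq_sum] at hd
  obtain ⟨e, he, hde⟩ := Finset.mem_biUnion.mp (support_sum hd)
  rw [Finset.mem_singleton.mp (support_monomial_subset hde)]
  exact tsub_le_tsub_right (hp e he) _

theorem reflect_mul {M N : ι →₀ ℕ} {p q : MvPolynomial ι R}
    (hp : ∀ d ∈ p.support, d ≤ M) (hq : ∀ d ∈ q.support, d ≤ N) :
    reflect M p * reflect N q = reflect (M + N) (p * q) := by
  conv_rhs => rw [p.as_sum, q.as_sum, Finset.sum_mul_sum]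
  rw [reflect_eq_sum, reflect_eq_sum, Finset.sum_mul_sum]
  simp only [map_sum, monomial_mul, reflect_monomial]
  refine Finset.sum_congr rfl fun d hd => Finset.sum_congr rfl fun e he => ?_
  rw [tsub_add_tsub_comm (hp d hd) (hq e he)]

theorem reflect_eq_monomial_mul {M N : ι →₀ ℕ} {p : MvPolynomial ι R} (hMN : M ≤ N)
    (hp : ∀ d ∈ p.support, d ≤ M) :
    reflect N p = monomial (N - M) 1 * reflect M p := by
  simp only [reflect_eq_sum, Finset.mul_sum, monomial_mul, one_mul]
  refine Finset.sum_congr rfl fun d hd => ?_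
  rw [tsub_add_tsub_cancel hMN (hp d hd)]

end CommSemiring

variable {ι R : Type*} [CommRing R]

theorem X_mul_pderiv_reflect {N : ι →₀ ℕ} {p : MvPolynomial ι R}
    (hp : ∀ d ∈ p.support, d ≤ N) (i : ι) :
    X i * pderiv i (reflect N p)
      = (N i : MvPolynomial ι R) * reflect N p
        - reflect (N - Finsupp.single i 1) (pderiv i p) := by
  rw [pderiv_eq_sum i p, reflect_eq_sum N p]
  simp only [map_sum, Finset.mul_sum, X_mul_pderiv_monomial, reflect_monomial,
    ← Finset.sum_sub_distrib]
  refine Finset.sum_congr rfl fun d hd => ?_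
  have hdN := hp d hd
  rcases Nat.eq_zero_or_pos (d i) with h0 | hpos
  · simp [h0]
  · have hexp : N - Finsupp.single i 1 - (d - Finsupp.single i 1) = N - d := by
      ext k
      have := hdN k
      rcases eq_or_ne k i with rfl | hki
      · simp only [Finsupp.tsub_apply, Finsupp.single_eq_same]
        omega
      · simp [Finsupp.single_eq_of_ne hki]
    rw [hexp, Finsupp.tsub_apply, nsmul_eq_mul, Nat.cast_sub (hdN i), sub_mul, ← C_eq_coe_nat,
      ← C_eq_coe_nat, C_mul_monomial, C_mul_monomial, mul_comm (N i : R), mul_comm (d i : R)]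

noncomputable def pdeLhs (i j : ι) (u : MvPolynomial ι R) : MvPolynomial ι R :=
  u * pderiv i (pderiv j u) - pderiv i u * pderiv j u

theorem X_mul_X_mul_pdeLhs_reflect {N : ι →₀ ℕ} {u : MvPolynomial ι R} {i j : ι} (hij : i ≠ j)
    (hN : Finsupp.single i 1 + Finsupp.single j 1 ≤ N) (hu : ∀ d ∈ u.support, d ≤ N) :
    X i * X j * pdeLhs i j (reflect N u)
      = reflect (N + N - (Finsupp.single i 1 + Finsupp.single j 1)) (pdeLhs i j u) := by
  have hui := le_of_mem_support_pderiv hu i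
  have huj := le_of_mem_support_pderiv hu j
  have hi := X_mul_pderiv_reflect hu i
  have hj := X_mul_pderiv_reflect hu j
  have hji := X_mul_pderiv_reflect huj i
  have hNj : (N - Finsupp.single j 1 : ι →₀ ℕ) i = N i := by simp [Finsupp.single_eq_of_ne hij]
  rw [hNj] at hji
  set a : MvPolynomial ι R := (N i : MvPolynomial ι R)
  set b : MvPolynomial ι R := (N j : MvPolynomial ι R)
  set U := reflect N u
  set Ui := reflect (N - Finsupp.single i 1) (pderiv i u)
  set Uj := reflect (N - Finsupp.single j 1) (pderiv j u)
  set Uij := reflect (N - Finsupp.single j 1 - Finsupp.single i 1) (pderiv i (pderiv j u))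
  have hmixed : X i * X j * pderiv i (pderiv j U) = b * (a * U - Ui) - (a * Uj - Uij) :=
    calc X i * X j * pderiv i (pderiv j U) = X i * pderiv i (X j * pderiv j U) := by
          rw [pderiv_mul, pderiv_X_of_ne hij.symm]
          ring
      _ = X i * pderiv i (b * U - Uj) := by rw [hj]
      _ = b * (X i * pderiv i U) - X i * pderiv i Uj := by
          rw [map_sub, pderiv_mul, show pderiv i b = 0 from (pderiv i).map_natCast (N j)]
          ring
      _ = b * (a * U - Ui) - (a * Uj - Uij) := by rw [hi, hji]
  have hcross : X i * X j * pdeLhs i j U = U * Uij - Ui * Uj := by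
    unfold pdeLhs
    linear_combination U * hmixed - X j * pderiv j U * hi - (a * U - Ui) * hj
  have hNij : N + (N - Finsupp.single j 1 - Finsupp.single i 1)
      = N + N - (Finsupp.single i 1 + Finsupp.single j 1) := by
    rw [tsub_tsub, add_comm (Finsupp.single j 1), add_tsub_assoc_of_le hN]
  have hNi_Nj : (N - Finsupp.single i 1) + (N - Finsupp.single j 1)
      = N + N - (Finsupp.single i 1 + Finsupp.single j 1) :=
    tsub_add_tsub_comm (le_trans le_self_add hN) (le_trans le_add_self hN)
  rw [hcross, reflect_mul hu (le_of_mem_support_pderiv huj i), reflect_mul hui huj, hNij, hNi_Nj,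
    ← map_sub]
  rfl

end MvPolynomial

noncomputable def bideg (n : ℕ) : Fin 2 →₀ ℕ :=
  Finsupp.single 0 n + Finsupp.single 1 n

@[simp]
theorem bideg_apply (n : ℕ) (k : Fin 2) : bideg n k = n := by
  fin_cases k <;> simp [bideg]

theorem bideg_add (a b : ℕ) : bideg a + bideg b = bideg (a + b) := by
  ext k
  simp

theorem bideg_sub (a b : ℕ) : bideg a - bideg b = bideg (a - b) := by
  ext k
  simp

theorem bideg_le_bideg {a b : ℕ} (h : a ≤ b) : bideg a ≤ bideg b := fun k => by
  simpa using h

theorem le_bideg_of_degreeOf_le {R : Type*} [CommSemiring R] {p : MvPolynomial (Fin 2) R} {n : ℕ}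
    (hx : p.degreeOf 0 ≤ n) (hy : p.degreeOf 1 ≤ n) : ∀ d ∈ p.support, d ≤ bideg n := by
  intro d hd k
  fin_cases k
  · simpa using (monomial_le_degreeOf 0 hd).trans hx
  · simpa using (monomial_le_degreeOf 1 hd).trans hy

theorem monomial_bideg {R : Type*} [CommSemiring R] (n : ℕ) :
    monomial (bideg n) (1 : R) = (X 0 * X 1) ^ n := by
  rw [bideg, ← one_mul (1 : R), ← monomial_mul, mul_pow, X_pow_eq_monomial, X_pow_eq_monomial]

theorem mvRev_eq_reflect {n : ℕ} {u : MvPolynomial (Fin 2) ℂ}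
    (hx : u.degreeOf 0 < n) (hy : u.degreeOf 1 < n) : mvRev n u = reflect (bideg n) u := by
  set g : ℕ × ℕ → Fin 2 →₀ ℕ := fun p => Finsupp.single 0 p.1 + Finsupp.single 1 p.2
  have hg : Function.Injective g := fun p q hpq => by
    have h0 := DFunLike.congr_fun hpq 0
    have h1 := DFunLike.congr_fun hpq 1
    simp only [g, Finsupp.add_apply, Finsupp.single_apply] at h0 h1
    exact Prod.ext (by simpa using h0) (by simpa using h1)
  have hexp (i j : ℕ) : Finsupp.single (0 : Fin 2) (n - i) + Finsupp.single 1 (n - j)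
      = bideg n - g (i, j) := by
    ext k
    fin_cases k <;> simp [g]
  have hsupp : u.support ⊆ (Finset.range n ×ˢ Finset.range n).image g := by
    intro d hd
    refine Finset.mem_image.mpr ⟨(d 0, d 1), ?_, ?_⟩
    · simp only [Finset.mem_product, Finset.mem_range]
      exact ⟨(monomial_le_degreeOf _ hd).trans_lt hx, (monomial_le_degreeOf _ hd).trans_lt hy⟩
    · ext k
      fin_cases k <;> simp [g]
  rw [mvRev, reflect_eq_sum, ← Finset.sum_product', Finset.sum_subset hsupp,
    Finset.sum_image hg.injOn]
  · simp only [hexp]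
    rfl
  · intro d _ hd
    rw [notMem_support_iff.mp hd, monomial_zero]

theorem stmt16_general (m n : ℕ) (hm : 1 ≤ m) (hn : m + 2 ≤ n)
    (σ u : MvPolynomial (Fin 2) ℂ)
    (hσx : σ.degreeOf 0 ≤ m - 1) (hσy : σ.degreeOf 1 ≤ m - 1)
    (hux : u.degreeOf 0 ≤ n - 1) (huy : u.degreeOf 1 ≤ n - 1)
    (hode : SolvesPDE σ u) :
    SolvesPDE ((X 0 * X 1) ^ (n - m - 2) * mvRev m σ) (mvRev n u) := by
  have hu : ∀ d ∈ u.support, d ≤ bideg n := le_bideg_of_degreeOf_le (by omega) (by omega)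
  have hσ : ∀ d ∈ σ.support, d ≤ bideg m := le_bideg_of_degreeOf_le (by omega) (by omega)
  have hσ' : ∀ d ∈ σ.support, d ≤ bideg (n - 1) := le_bideg_of_degreeOf_le (by omega) (by omega)
  have hode : pdeLhs 0 1 u = σ * u := hode
  rw [mvRev_eq_reflect (by omega) (by omega), mvRev_eq_reflect (by omega) (by omega)]
  refine mul_left_cancel₀ (mul_ne_zero (X_ne_zero 0) (X_ne_zero 1)) ?_
  calc X 0 * X 1 * pdeLhs 0 1 (reflect (bideg n) u)
      = reflect (bideg (n - 1) + bideg n) (σ * u) := by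
        rw [X_mul_X_mul_pdeLhs_reflect (by decide) (bideg_le_bideg (by omega)) hu, hode]
        change reflect (bideg n + bideg n - bideg 1) _ = _
        rw [bideg_add, bideg_add, bideg_sub, show n + n - 1 = n - 1 + n by omega]
    _ = reflect (bideg (n - 1)) σ * reflect (bideg n) u := (reflect_mul hσ' hu).symm
    _ = X 0 * X 1 * ((X 0 * X 1) ^ (n - m - 2) * reflect (bideg m) σ * reflect (bideg n) u) := by
        rw [reflect_eq_monomial_mul (bideg_le_bideg (by omega)) hσ, bideg_sub, monomial_bideg,
          show n - 1 - m = n - m - 2 + 1 by omega]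
        ring

/-- Let `σ ∈ P_m[x,y]` have total degree `2m−2` and let `n ≥ m+2`.
If `u ∈ P_n[x,y]` solves the PDE for the data `σ`, then `ũ(x,y) = (xy)^n·u(1/x,1/y)`
solves the PDE with data `(xy)^{n−m−2}·σ̃(x,y)`, where `σ̃(x,y) = (xy)^m·σ(1/x,1/y)`. -/
theorem stmt16 (m n : ℕ) (hm : 1 ≤ m) (hn : m + 2 ≤ n)
    (σ u : MvPolynomial (Fin 2) ℂ)
    (hσx : σ.degreeOf 0 ≤ m - 1) (hσy : σ.degreeOf 1 ≤ m - 1)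
    (hσd : σ.totalDegree = 2 * m - 2)
    (hux : u.degreeOf 0 ≤ n - 1) (huy : u.degreeOf 1 ≤ n - 1)
    (hode : SolvesPDE σ u) :
    SolvesPDE ((X 0 * X 1) ^ (n - m - 2) * mvRev m σ) (mvRev n u) :=
  stmt16_general m n hm hn σ u hσx hσy hux huy hode
end
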